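/- Let G be a group and φ : G → SL₃(ℤ) a group homomorphism. Let α, β, γ ∈ ℝ be linearly independent over ℤ (i.e., if a, b, c ∈ ℤ and aα + bβ + cγ = 0 then a = b = c = 0), and let P = {w ∈ ℤ³ : ⟨(α,β,γ), w⟩ > 0}, which is a positive cone of ℤ³. Suppose there exist nonzero integers n, m and elements g, h ∈ G such that φ(g) = I₃ + n·E₁₃ and φ(h) = I₃ + m·E₂₃. Then for every finite subset F ⊆ P there exists k in the subgroup generated by g and h such that φ(k)·P ≠ P and F ⊆ φ(k)·P. -/

import Mathlib

/-!
The matrices `φ(gᵃ hᵇ)` are the shears `I + an E₁₃ + bm E₂₃`, and such a shear moves the cone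
of `(α, β, γ)` to the cone of `(α, β, γ - t)` with `t = anα + bmβ`. By the independence of
`α, β, γ` these `t` form a dense subgroup of `ℝ`. A small `t > 0` keeps the finitely many
points of `F` in the cone, while any `t > 0` changes the cone: a point `(a'n, b'm, 1)` with
`0 < a'nα + b'mβ + γ < t` lies in `P` but not in the moved cone.
-/

/-- The Euclidean inner product of a real vector with an integer vector. -/
def ipZ {n : ℕ} (v : Fin n → ℝ) (w : Fin n → ℤ) : ℝ := ∑ i, v i * (w i : ℝ)

/-- The image `A · P` of a subset `P ⊆ ℤ³` under a matrix `A`. -/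
def mulVecSet (A : Matrix (Fin 3) (Fin 3) ℤ) (P : Set (Fin 3 → ℤ)) :
    Set (Fin 3 → ℤ) :=
  (fun w => A.mulVec w) '' P

open Filter Topology Matrix

theorem irrational_div_of_int_linearIndependent {x y : ℝ}
    (hxy : ∀ p q : ℤ, (p : ℝ) * x + q * y = 0 → p = 0 ∧ q = 0) : Irrational (x / y) := by
  have hy : y ≠ 0 := fun hy => one_ne_zero (hxy 0 1 (by simp [hy])).2
  refine (irrational_iff_ne_rational _).2 fun p q hq hpq => hq (hxy q (-p) ?_).1
  rw [div_eq_div_iff hy (by exact_mod_cast hq)] at hpq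
  push_cast
  linear_combination hpq

def posCone {n : ℕ} (v : Fin n → ℝ) : Set (Fin n → ℤ) := {w | 0 < ipZ v w}

lemma ipZ_sub_smul_single {n : ℕ} (v : Fin n → ℝ) (t : ℝ) (i : Fin n) (w : Fin n → ℤ) :
    ipZ (v - t • Pi.single i 1) w = ipZ v w - t * w i := by
  simp [ipZ, sub_mul, Finset.sum_sub_distrib, Pi.single_apply]

lemma eventually_subset_posCone_sub_smul_single {n : ℕ} (v : Fin n → ℝ) (i : Fin n)
    (F : Finset (Fin n → ℤ)) (hF : ↑F ⊆ posCone v) :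
    ∀ᶠ t in 𝓝 (0 : ℝ), ↑F ⊆ posCone (v - t • Pi.single i 1) := by
  simp only [Set.subset_def, Finset.mem_coe, posCone, Set.mem_ofPred_eq, ipZ_sub_smul_single]
  refine (eventually_all_finset F).2 fun w hw => ?_
  have hcont : Continuous fun t : ℝ => ipZ v w - t * w i := by fun_prop
  have hw' : 0 < ipZ v w := hF hw
  exact hcont.continuousAt.eventually (lt_mem_nhds (by simpa using hw'))

lemma posCone_sub_smul_single_ne {n : ℕ} (v : Fin n → ℝ) (t : ℝ) (i : Fin n) (u : Fin n → ℤ)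
    (hu : 0 < ipZ v u) (hut : ipZ v u ≤ t * u i) :
    posCone (v - t • Pi.single i 1) ≠ posCone v := by
  intro heq
  have hmem : u ∈ posCone (v - t • Pi.single i 1) := heq ▸ hu
  simp only [posCone, Set.mem_ofPred_eq, ipZ_sub_smul_single] at hmem
  linarith

def shear (x : ℤ × ℤ) : Matrix (Fin 3) (Fin 3) ℤ := !![1, 0, x.1; 0, 1, x.2; 0, 0, 1]

lemma shear_add (x y : ℤ × ℤ) : shear (x + y) = shear x * shear y := by
  ext i j
  fin_cases i <;> fin_cases j <;> simp [shear, mul_apply, Fin.sum_univ_three, add_comm]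

lemma shear_zero : shear 0 = 1 := by
  ext i j
  fin_cases i <;> fin_cases j <;> simp [shear]

lemma det_shear (x : ℤ × ℤ) : (shear x).det = 1 := by
  simp [shear, det_fin_three]

lemma one_add_smul_single_add_smul_single (p q : ℤ) :
    1 + p • single 0 2 1 + q • single 1 2 1 = shear (p, q) := by
  ext i j
  fin_cases i <;> fin_cases j <;> simp [shear]

def shearHom : Multiplicative (ℤ × ℤ) →* SpecialLinearGroup (Fin 3) ℤ where
  toFun x := ⟨shear x.toAdd, det_shear _⟩
  map_one' := Subtype.ext shear_zero
  map_mul' x y := Subtype.ext (shear_add x.toAdd y.toAdd)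

lemma coe_shearHom (x : ℤ × ℤ) : (shearHom (.ofAdd x) : Matrix (Fin 3) (Fin 3) ℤ) = shear x :=
  rfl

lemma coe_map_zpow_mul_zpow_of_eq_shear {G : Type*} [Group G]
    (φ : G →* SpecialLinearGroup (Fin 3) ℤ) {g h : G} {x y : ℤ × ℤ}
    (hg : (φ g : Matrix (Fin 3) (Fin 3) ℤ) = shear x)
    (hh : (φ h : Matrix (Fin 3) (Fin 3) ℤ) = shear y) (a b : ℤ) :
    (φ (g ^ a * h ^ b) : Matrix (Fin 3) (Fin 3) ℤ) = shear (a • x + b • y) := by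
  have hg' : φ g = shearHom (.ofAdd x) := Subtype.ext hg
  have hh' : φ h = shearHom (.ofAdd y) := Subtype.ext hh
  rw [map_mul, map_zpow, map_zpow, hg', hh', ← map_zpow shearHom, ← map_zpow shearHom,
    ← map_mul shearHom, ← ofAdd_zsmul, ← ofAdd_zsmul, ← ofAdd_add, coe_shearHom]

lemma ipZ_shear_mulVec (v : Fin 3 → ℝ) (x : ℤ × ℤ) (w : Fin 3 → ℤ) :
    ipZ v (shear x *ᵥ w) = ipZ v w + (x.1 * v 0 + x.2 * v 1) * w 2 := by
  simp [ipZ, shear, Fin.sum_univ_three, vecHead, vecTail]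
  ring

lemma mulVecSet_shear_posCone (v : Fin 3 → ℝ) (x : ℤ × ℤ) :
    mulVecSet (shear x) (posCone v) = posCone (v - (x.1 * v 0 + x.2 * v 1) • Pi.single 2 1) := by
  have hinv : ∀ y w, shear y *ᵥ (shear (-y) *ᵥ w) = w := fun y w => by
    rw [mulVec_mulVec, ← shear_add, add_neg_cancel, shear_zero, one_mulVec]
  rw [mulVecSet, Set.image_eq_preimage_of_inverse (g := (shear (-x) *ᵥ ·))
    (fun w => by simpa using hinv (-x) w) (hinv x)]
  ext u
  simp only [Set.mem_preimage, posCone, Set.mem_ofPred_eq, ipZ_shear_mulVec, ipZ_sub_smul_single,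
    Prod.fst_neg, Prod.snd_neg, Int.cast_neg]
  ring_nf

/-- If `φ : G → SL₃(ℤ)` hits the elementary matrices `I + n E₁₃` and `I + m E₂₃`
(`n, m ≠ 0`) and `P` is the positive cone of `ℤ³` defined by a vector `(α, β, γ)` whose
coordinates are linearly independent over `ℤ`, then every neighborhood of `P` contains a
translate `φ(k) · P ≠ P` with `k` in the subgroup generated by `g` and `h`. -/
theorem cone_limit_of_elementary_matrices
    {G : Type*} [Group G] (φ : G →* Matrix.SpecialLinearGroup (Fin 3) ℤ)
    (α β γ : ℝ)
    (hind : ∀ a b c : ℤ, (a : ℝ) * α + (b : ℝ) * β + (c : ℝ) * γ = 0 →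
      a = 0 ∧ b = 0 ∧ c = 0)
    (P : Set (Fin 3 → ℤ)) (hPdef : P = {w : Fin 3 → ℤ | 0 < ipZ ![α, β, γ] w})
    (n m : ℤ) (hn : n ≠ 0) (hm : m ≠ 0) (g h : G)
    (hg : (φ g : Matrix (Fin 3) (Fin 3) ℤ) = 1 + n • Matrix.single 0 2 1)
    (hh : (φ h : Matrix (Fin 3) (Fin 3) ℤ) = 1 + m • Matrix.single 1 2 1) :
    ∀ F : Finset (Fin 3 → ℤ), ↑F ⊆ P →
      ∃ k ∈ Subgroup.closure ({g, h} : Set G),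
        mulVecSet (φ k : Matrix (Fin 3) (Fin 3) ℤ) P ≠ P ∧
        ↑F ⊆ mulVecSet (φ k : Matrix (Fin 3) (Fin 3) ℤ) P := by
  intro F hF
  obtain rfl : P = posCone ![α, β, γ] := hPdef
  have hS : Dense (AddSubgroup.closure {(n : ℝ) * α, (m : ℝ) * β} : Set ℝ) := by
    refine dense_addSubgroupClosure_pair_iff.2 (irrational_div_of_int_linearIndependent ?_)
    intro p q hpq
    obtain ⟨hpn, hqm, -⟩ := hind (p * n) (q * m) 0 (by push_cast; linear_combination hpq)
    exact ⟨(mul_eq_zero.1 hpn).resolve_right hn, (mul_eq_zero.1 hqm).resolve_right hm⟩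
  obtain ⟨ε, hε, hnear⟩ :=
    Metric.eventually_nhds_iff.1 (eventually_subset_posCone_sub_smul_single _ 2 F hF)
  obtain ⟨t, htS, ht0, htε⟩ := hS.exists_between hε
  obtain ⟨s, hsS, hs⟩ := hS.exists_between (show -γ < t - γ by linarith)
  obtain ⟨a, b, hab⟩ := AddSubgroup.mem_closure_pair.1 htS
  obtain ⟨a', b', hab'⟩ := AddSubgroup.mem_closure_pair.1 hsS
  have hk := coe_map_zpow_mul_zpow_of_eq_shear φ
    (hg.trans (by simpa using one_add_smul_single_add_smul_single n 0))
    (hh.trans (by simpa using one_add_smul_single_add_smul_single 0 m)) a b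
  have hkt : ((a • (n, 0) + b • (0, m) : ℤ × ℤ).1 : ℝ) * ![α, β, γ] 0
      + ((a • (n, 0) + b • (0, m) : ℤ × ℤ).2 : ℝ) * ![α, β, γ] 1 = t := by
    simp [← hab, zsmul_eq_mul, mul_assoc]
  refine ⟨g ^ a * h ^ b, mul_mem (zpow_mem (Subgroup.subset_closure (by simp)) a)
    (zpow_mem (Subgroup.subset_closure (by simp)) b), ?_, ?_⟩ <;>
    rw [hk, mulVecSet_shear_posCone, hkt]
  · have hu : ipZ ![α, β, γ] ![a' * n, b' * m, 1] = s + γ := by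
      simp [ipZ, Fin.sum_univ_three, ← hab', zsmul_eq_mul]
      ring
    refine posCone_sub_smul_single_ne _ _ 2 _ (by linarith [hs.1]) ?_
    simp only [hu, Matrix.cons_val_two, Matrix.tail_cons, Matrix.head_cons, Int.cast_one, mul_one]
    linarith [hs.2]
  · exact hnear (by rwa [Real.dist_0_eq_abs, abs_of_pos ht0])
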